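/- arXiv:1708.08207 — 2 statements merged into one kernel-verified Lean document; each statement's English description precedes it below -/
import Mathlib

section
/- For m, n ≥ 4, every vertex of the line graph L(M_{m,n}) of the generalized Möbius ladder has degree 4, 5, or 6, and no edge of L(M_{m,n}) joins two vertices of degree 5. -/
/-- Directed base relation for the generalized Möbius ladder `M_{m,n}`:
columns are indexed by `ZMod (m-1)` (the end columns of the grid `P_m × P_n`
are identified with a half twist), rows by `Fin n`. -/
def gmlRel (m n : ℕ) (v w : ZMod (m - 1) × Fin n) : Prop :=
  -- vertical edge within a column
  (v.1 = w.1 ∧ v.2.val + 1 = w.2.val) ∨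
  -- ordinary horizontal edge to the next column
  (v.1 ≠ ((m - 2 : ℕ) : ZMod (m - 1)) ∧ w.1 = v.1 + 1 ∧ v.2 = w.2) ∨
  -- twisted horizontal edge from the last column back to the first
  (v.1 = ((m - 2 : ℕ) : ZMod (m - 1)) ∧ w.1 = 0 ∧ v.2.val + w.2.val = n - 1)

/-- The generalized Möbius ladder `M_{m,n}`. -/
def GML (m n : ℕ) : SimpleGraph (ZMod (m - 1) × Fin n) :=
  SimpleGraph.fromRel (gmlRel m n)

/-- Degree of a vertex, defined via `Set.ncard` so that no `Fintype`
instances are needed. -/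
noncomputable def ndeg {V : Type*} (G : SimpleGraph V) (v : V) : ℕ :=
  (G.neighborSet v).ncard

open SimpleGraph in
lemma ndeg_lineGraph {V : Type*} [Finite V] {G : SimpleGraph V} {u v : V} (h : G.Adj u v)
    (he : s(u, v) ∈ G.edgeSet) :
    ndeg G.lineGraph ⟨s(u, v), he⟩ = ndeg G u + ndeg G v - 2 := by
  classical
  have key : Subtype.val '' (G.lineGraph.neighborSet ⟨s(u, v), he⟩)
      = (fun x => s(u, x)) '' (G.neighborSet u \ {v})
        ∪ (fun x => s(v, x)) '' (G.neighborSet v \ {u}) := by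
    ext g
    simp only [Set.mem_image, mem_neighborSet, lineGraph_adj_iff_exists]
    constructor
    · rintro ⟨⟨g, hg⟩, ⟨hne, w, hw1, hw2⟩, rfl⟩
      simp only [Sym2.mem_iff] at hw1
      have hne' : s(u, v) ≠ g := fun hh => hne (Subtype.ext hh)
      induction g using Sym2.ind with
      | _ a b =>
        have hab : G.Adj a b := G.mem_edgeSet.mp hg
        simp only [Sym2.mem_iff] at hw2
        rcases hw1 with rfl | rfl
        · left
          rcases hw2 with rfl | rfl
          · refine ⟨b, ⟨hab, ?_⟩, rfl⟩
            intro hbv; exact hne' (by rw [hbv])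
          · refine ⟨a, ⟨hab.symm, ?_⟩, Sym2.eq_swap⟩
            intro hav; exact hne' (by rw [hav, Sym2.eq_swap])
        · right
          rcases hw2 with rfl | rfl
          · refine ⟨b, ⟨hab, ?_⟩, rfl⟩
            intro hbu; exact hne' (by rw [hbu, Sym2.eq_swap])
          · refine ⟨a, ⟨hab.symm, ?_⟩, Sym2.eq_swap⟩
            intro hau; exact hne' (by rw [hau])
    · rintro (⟨x, ⟨hx, hxv⟩, rfl⟩ | ⟨x, ⟨hx, hxu⟩, rfl⟩)
      · refine ⟨⟨s(u, x), G.mem_edgeSet.2 hx⟩, ⟨?_, u, by simp, by simp⟩, rfl⟩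
        intro hcon
        have : s(u, v) = s(u, x) := congrArg Subtype.val hcon
        exact hxv ((Sym2.congr_right.mp this).symm)
      · refine ⟨⟨s(v, x), G.mem_edgeSet.2 hx⟩, ⟨?_, v, by simp, by simp⟩, rfl⟩
        intro hcon
        have : s(u, v) = s(v, x) := congrArg Subtype.val hcon
        rw [Sym2.eq_swap] at this
        exact hxu ((Sym2.congr_right.mp this).symm)
  have hinj1 : Function.Injective (fun x : V => s(u, x)) := fun a b hab =>
    Sym2.congr_right.mp hab
  have hinj2 : Function.Injective (fun x : V => s(v, x)) := fun a b hab =>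
    Sym2.congr_right.mp hab
  have hdisj : Disjoint ((fun x => s(u, x)) '' (G.neighborSet u \ {v}))
      ((fun x => s(v, x)) '' (G.neighborSet v \ {u})) := by
    rw [Set.disjoint_left]
    rintro g ⟨x, ⟨hx, hxv⟩, rfl⟩ ⟨y, ⟨hy, hyu⟩, hyx⟩
    simp only at hyx
    rw [Sym2.eq_iff] at hyx
    rcases hyx with ⟨rfl, rfl⟩ | ⟨rfl, rfl⟩
    · exact h.ne rfl
    · exact hxv rfl
  have h1 : (G.neighborSet u \ {v}).ncard = (G.neighborSet u).ncard - 1 :=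
    Set.ncard_diff_singleton_of_mem h
  have h2 : (G.neighborSet v \ {u}).ncard = (G.neighborSet v).ncard - 1 :=
    Set.ncard_diff_singleton_of_mem h.symm
  have hu1 : 1 ≤ (G.neighborSet u).ncard := by
    rw [Nat.one_le_iff_ne_zero, ← Nat.pos_iff_ne_zero]
    exact (Set.ncard_pos (Set.toFinite _)).2 ⟨v, h⟩
  have hv1 : 1 ≤ (G.neighborSet v).ncard := by
    rw [Nat.one_le_iff_ne_zero, ← Nat.pos_iff_ne_zero]
    exact (Set.ncard_pos (Set.toFinite _)).2 ⟨u, h.symm⟩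
  have : ndeg G.lineGraph ⟨s(u, v), he⟩
      = (Subtype.val '' (G.lineGraph.neighborSet ⟨s(u, v), he⟩)).ncard := by
    rw [Set.ncard_image_of_injective _ Subtype.val_injective]; rfl
  rw [this, key, Set.ncard_union_eq hdisj (Set.toFinite _) (Set.toFinite _),
    Set.ncard_image_of_injective _ hinj1, Set.ncard_image_of_injective _ hinj2, h1, h2]
  unfold ndeg
  omega


/-- right horizontal neighbor -/
def rtv (m n : ℕ) (v : ZMod (m - 1) × Fin n) : ZMod (m - 1) × Fin n :=
  (v.1 + 1, if v.1 = -1 then v.2.rev else v.2)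

/-- left horizontal neighbor -/
def ltv (m n : ℕ) (v : ZMod (m - 1) × Fin n) : ZMod (m - 1) × Fin n :=
  (v.1 - 1, if v.1 = 0 then v.2.rev else v.2)

section
variable {m n : ℕ}

lemma cast_sub_two (hm : 4 ≤ m) : ((m - 2 : ℕ) : ZMod (m - 1)) = -1 := by
  have h1 : ((m - 2 : ℕ) : ZMod (m - 1)) + 1 = 0 := by
    have : ((m - 2 : ℕ) : ZMod (m - 1)) + 1 = ((m - 2 + 1 : ℕ) : ZMod (m - 1)) := by
      push_cast; ring
    rw [this, show m - 2 + 1 = m - 1 by omega, ZMod.natCast_self]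
  linear_combination h1

lemma oneNeZero (hm : 4 ≤ m) : (1 : ZMod (m - 1)) ≠ 0 := by
  haveI : NeZero (m - 1) := ⟨by omega⟩
  intro hc
  rw [show (1 : ZMod (m - 1)) = ((1 : ℕ) : ZMod (m - 1)) by push_cast; ring] at hc
  rw [ZMod.natCast_eq_zero_iff] at hc
  have := Nat.le_of_dvd (by omega) hc
  omega

lemma twoNeZero (hm : 4 ≤ m) : (2 : ZMod (m - 1)) ≠ 0 := by
  haveI : NeZero (m - 1) := ⟨by omega⟩
  intro hc
  rw [show (2 : ZMod (m - 1)) = ((2 : ℕ) : ZMod (m - 1)) by push_cast; ring] at hc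
  rw [ZMod.natCast_eq_zero_iff] at hc
  have := Nat.le_of_dvd (by omega) hc
  omega

lemma rev_eq_iff (hn : 1 ≤ n) (r s : Fin n) : r.val + s.val = n - 1 ↔ s = r.rev := by
  rw [Fin.ext_iff, Fin.val_rev]
  omega

lemma gml_adj_iff (hm : 4 ≤ m) (hn : 1 ≤ n) (v w : ZMod (m - 1) × Fin n) :
    (GML m n).Adj v w ↔
      (v.1 = w.1 ∧ (v.2.val + 1 = w.2.val ∨ w.2.val + 1 = v.2.val)) ∨
      w = rtv m n v ∨ w = ltv m n v := by
  rw [GML, SimpleGraph.fromRel_adj]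
  unfold gmlRel
  rw [cast_sub_two hm]
  constructor
  · rintro ⟨hne, h | h⟩
    · rcases h with ⟨h1, h2⟩ | ⟨h1, h2, h3⟩ | ⟨h1, h2, h3⟩
      · exact Or.inl ⟨h1, Or.inl h2⟩
      · refine Or.inr (Or.inl ?_)
        unfold rtv
        rw [Prod.ext_iff]
        exact ⟨h2, by rw [if_neg h1]; exact h3.symm⟩
      · refine Or.inr (Or.inl ?_)
        unfold rtv
        rw [Prod.ext_iff]
        refine ⟨by rw [h2, h1]; ring, ?_⟩
        rw [if_pos h1]
        exact (rev_eq_iff hn _ _).mp h3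
    · rcases h with ⟨h1, h2⟩ | ⟨h1, h2, h3⟩ | ⟨h1, h2, h3⟩
      · exact Or.inl ⟨h1.symm, Or.inr h2⟩
      · refine Or.inr (Or.inr ?_)
        unfold ltv
        have hv0 : v.1 ≠ 0 := by
          rw [h2]; intro hc
          apply h1
          linear_combination hc
        rw [Prod.ext_iff]
        exact ⟨by rw [h2]; ring, by rw [if_neg hv0]; exact h3⟩
      · refine Or.inr (Or.inr ?_)
        unfold ltv
        rw [Prod.ext_iff]
        refine ⟨by rw [h1, h2]; ring, ?_⟩
        show w.2 = if v.1 = 0 then v.2.rev else v.2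
        rw [if_pos h2, ← rev_eq_iff hn]
        omega
  · rintro (⟨h1, h2 | h2⟩ | rfl | rfl)
    · refine ⟨?_, Or.inl (Or.inl ⟨h1, h2⟩)⟩
      intro hc; rw [hc] at h2; omega
    · refine ⟨?_, Or.inr (Or.inl ⟨h1.symm, h2⟩)⟩
      intro hc; rw [hc] at h2; omega
    · unfold rtv
      constructor
      · intro hc
        have := congrArg Prod.fst hc
        simp only at this
        exact oneNeZero hm (by linear_combination -this)
      · by_cases hv : v.1 = -1
        · refine Or.inl (Or.inr (Or.inr ⟨hv, ?_, ?_⟩))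
          · simp [hv]
          · simp only [if_pos hv]
            rw [Fin.val_rev]; omega
        · exact Or.inl (Or.inr (Or.inl ⟨hv, by simp [hv], by simp [hv]⟩))
    · unfold ltv
      constructor
      · intro hc
        have := congrArg Prod.fst hc
        simp only at this
        exact oneNeZero hm (by linear_combination this)
      · by_cases hv : v.1 = 0
        · refine Or.inr (Or.inr (Or.inr ⟨?_, by simpa using hv, ?_⟩))
          · simp only [if_pos hv, hv]; ring
          · simp only [if_pos hv]
            rw [Fin.val_rev]; omega
        · refine Or.inr (Or.inr (Or.inl ⟨?_, ?_, by simp [hv]⟩))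
          · simp only
            intro hc
            apply hv
            linear_combination hc
          · simp only; ring

lemma neighborSet_GML (hm : 4 ≤ m) (hn : 1 ≤ n) (v : ZMod (m - 1) × Fin n) :
    (GML m n).neighborSet v =
      (Prod.mk v.1 '' {r : Fin n | v.2.val + 1 = r.val ∨ r.val + 1 = v.2.val})
        ∪ {rtv m n v, ltv m n v} := by
  ext w
  rw [SimpleGraph.mem_neighborSet, gml_adj_iff hm hn]
  simp only [Set.mem_union, Set.mem_image, Set.mem_setOf_eq, Set.mem_insert_iff,
    Set.mem_singleton_iff]
  constructor
  · rintro (⟨h1, h2⟩ | h | h)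
    · exact Or.inl ⟨w.2, h2, by rw [h1]⟩
    · exact Or.inr (Or.inl h)
    · exact Or.inr (Or.inr h)
  · rintro (⟨r, hr, rfl⟩ | h | h)
    · exact Or.inl ⟨rfl, hr⟩
    · exact Or.inr (Or.inl h)
    · exact Or.inr (Or.inr h)

lemma rowset_ncard (hn : 4 ≤ n) (a : Fin n) :
    {r : Fin n | a.val + 1 = r.val ∨ r.val + 1 = a.val}.ncard
      = if a.val = 0 ∨ a.val = n - 1 then 1 else 2 := by
  have ha := a.isLt
  by_cases h0 : a.val = 0
  · rw [if_pos (Or.inl h0)]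
    have : {r : Fin n | a.val + 1 = r.val ∨ r.val + 1 = a.val} = {(⟨1, by omega⟩ : Fin n)} := by
      ext r
      have := r.isLt
      simp only [Set.mem_setOf_eq, Set.mem_singleton_iff, Fin.ext_iff]
      omega
    rw [this, Set.ncard_singleton]
  · by_cases h1 : a.val = n - 1
    · rw [if_pos (Or.inr h1)]
      have : {r : Fin n | a.val + 1 = r.val ∨ r.val + 1 = a.val}
          = {(⟨n - 2, by omega⟩ : Fin n)} := by
        ext r
        have := r.isLt
        simp only [Set.mem_setOf_eq, Set.mem_singleton_iff, Fin.ext_iff]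
        omega
      rw [this, Set.ncard_singleton]
    · rw [if_neg (by tauto)]
      have : {r : Fin n | a.val + 1 = r.val ∨ r.val + 1 = a.val}
          = {(⟨a.val + 1, by omega⟩ : Fin n), (⟨a.val - 1, by omega⟩ : Fin n)} := by
        ext r
        have := r.isLt
        simp only [Set.mem_setOf_eq, Set.mem_insert_iff, Set.mem_singleton_iff, Fin.ext_iff]
        omega
      rw [this, Set.ncard_pair (by simp only [ne_eq, Fin.ext_iff]; omega)]


lemma ndeg_GML (hm : 4 ≤ m) (hn : 4 ≤ n) (v : ZMod (m - 1) × Fin n) :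
    ndeg (GML m n) v = if v.2.val = 0 ∨ v.2.val = n - 1 then 3 else 4 := by
  haveI : NeZero (m - 1) := ⟨by omega⟩
  unfold ndeg
  rw [neighborSet_GML hm (by omega) v]
  have hdisj : Disjoint
      (Prod.mk v.1 '' {r : Fin n | v.2.val + 1 = r.val ∨ r.val + 1 = v.2.val})
      ({rtv m n v, ltv m n v} : Set (ZMod (m - 1) × Fin n)) := by
    rw [Set.disjoint_left]
    rintro w ⟨r, _, rfl⟩ (hc | hc)
    · have h := congrArg Prod.fst hc
      simp only [rtv] at h
      exact oneNeZero hm (by linear_combination -h)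
    · have h := congrArg Prod.fst hc
      simp only [ltv] at h
      exact oneNeZero hm (by linear_combination h)
  have hinj : Function.Injective (Prod.mk v.1 : Fin n → ZMod (m - 1) × Fin n) :=
    fun a b hab => by simpa using hab
  have hpair : rtv m n v ≠ ltv m n v := by
    intro hc
    have h := congrArg Prod.fst hc
    simp only [rtv, ltv] at h
    exact twoNeZero hm (by linear_combination h)
  rw [Set.ncard_union_eq hdisj (Set.toFinite _) (Set.toFinite _),
    Set.ncard_image_of_injective _ hinj, rowset_ncard hn, Set.ncard_pair hpair]
  split_ifs <;> rfl

lemma deg5_edge (hm : 4 ≤ m) (hn : 4 ≤ n) {u v : ZMod (m - 1) × Fin n}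
    (h : (GML m n).Adj u v) (hu : u.2.val = 0 ∨ u.2.val = n - 1)
    (hv : ¬(v.2.val = 0 ∨ v.2.val = n - 1)) :
    u.1 = v.1 ∧ ((u.2.val = 0 ∧ v.2.val = 1) ∨ (u.2.val = n - 1 ∧ v.2.val = n - 2)) := by
  have hvlt := v.2.isLt
  have hult := u.2.isLt
  rcases (gml_adj_iff hm (by omega) u v).mp h with ⟨h1, h2⟩ | rfl | rfl
  · exact ⟨h1, by omega⟩
  · exfalso
    apply hv
    simp only [rtv]
    split_ifs
    · rw [Fin.val_rev]; omega
    · omega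
  · exfalso
    apply hv
    simp only [ltv]
    split_ifs
    · rw [Fin.val_rev]; omega
    · omega

lemma key_lemma (hn : 4 ≤ n) {u v a b w : ZMod (m - 1) × Fin n}
    (h1 : u.1 = v.1 ∧ ((u.2.val = 0 ∧ v.2.val = 1) ∨ (u.2.val = n - 1 ∧ v.2.val = n - 2)))
    (h2 : a.1 = b.1 ∧ ((a.2.val = 0 ∧ b.2.val = 1) ∨ (a.2.val = n - 1 ∧ b.2.val = n - 2)))
    (hw1 : w = u ∨ w = v) (hw2 : w = a ∨ w = b) : s(u, v) = s(a, b) := by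
  obtain ⟨hc1, hr1⟩ := h1
  obtain ⟨hc2, hr2⟩ := h2
  rcases hw1 with rfl | rfl <;> rcases hw2 with rfl | rfl
  · have : v = b := by
      rw [Prod.ext_iff, Fin.ext_iff]
      exact ⟨hc1.symm.trans hc2, by omega⟩
    rw [this]
  · exfalso; omega
  · exfalso; omega
  · have : u = a := by
      rw [Prod.ext_iff, Fin.ext_iff]
      exact ⟨hc1.trans hc2.symm, by omega⟩
    rw [this]
end

/-- Every vertex of `L(M_{m,n})` (`m, n ≥ 4`) has degree 4, 5, or 6, and no edge
of `L(M_{m,n})` joins two vertices of degree 5. -/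
theorem gml_line_degrees (m n : ℕ) (hm : 4 ≤ m) (hn : 4 ≤ n) :
    (∀ e, ndeg (GML m n).lineGraph e = 4 ∨ ndeg (GML m n).lineGraph e = 5 ∨ ndeg (GML m n).lineGraph e = 6)
      ∧ ∀ e f, ((GML m n).lineGraph).Adj e f →
          ¬(ndeg (GML m n).lineGraph e = 5 ∧ ndeg (GML m n).lineGraph f = 5) := by
  haveI : NeZero (m - 1) := ⟨by omega⟩
  constructor
  · rintro ⟨e, he⟩
    induction e using Sym2.ind with
    | _ u v =>
      have h : (GML m n).Adj u v := (GML m n).mem_edgeSet.mp he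
      rw [ndeg_lineGraph h he, ndeg_GML hm hn, ndeg_GML hm hn]
      split_ifs <;> omega
  · rintro ⟨e, he⟩ ⟨f, hf⟩ hadj ⟨h5e, h5f⟩
    induction e using Sym2.ind with
    | _ u v =>
    induction f using Sym2.ind with
    | _ a b =>
      have huv : (GML m n).Adj u v := (GML m n).mem_edgeSet.mp he
      have hab : (GML m n).Adj a b := (GML m n).mem_edgeSet.mp hf
      rw [ndeg_lineGraph huv he, ndeg_GML hm hn, ndeg_GML hm hn] at h5e
      rw [ndeg_lineGraph hab hf, ndeg_GML hm hn, ndeg_GML hm hn] at h5f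
      rw [SimpleGraph.lineGraph_adj_iff_exists] at hadj
      obtain ⟨hne, w, hw1, hw2⟩ := hadj
      simp only [Sym2.mem_iff] at hw1 hw2
      have He : (u.1 = v.1 ∧ ((u.2.val = 0 ∧ v.2.val = 1) ∨ (u.2.val = n - 1 ∧ v.2.val = n - 2)))
          ∨ (v.1 = u.1 ∧ ((v.2.val = 0 ∧ u.2.val = 1) ∨ (v.2.val = n - 1 ∧ u.2.val = n - 2))) := by
        split_ifs at h5e with p1 p2 p2
        · exact absurd h5e (by omega)
        · exact Or.inl (deg5_edge hm hn huv p1 p2)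
        · exact Or.inr (deg5_edge hm hn huv.symm p2 p1)
        · exact absurd h5e (by omega)
      have Hf : (a.1 = b.1 ∧ ((a.2.val = 0 ∧ b.2.val = 1) ∨ (a.2.val = n - 1 ∧ b.2.val = n - 2)))
          ∨ (b.1 = a.1 ∧ ((b.2.val = 0 ∧ a.2.val = 1) ∨ (b.2.val = n - 1 ∧ a.2.val = n - 2))) := by
        split_ifs at h5f with p1 p2 p2
        · exact absurd h5f (by omega)
        · exact Or.inl (deg5_edge hm hn hab p1 p2)
        · exact Or.inr (deg5_edge hm hn hab.symm p2 p1)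
        · exact absurd h5f (by omega)
      apply hne
      apply Subtype.ext
      show s(u, v) = s(a, b)
      rcases He with h1 | h1 <;> rcases Hf with h2 | h2
      · exact key_lemma hn h1 h2 hw1 hw2
      · rw [show s(a, b) = s(b, a) from Sym2.eq_swap]
        exact key_lemma hn h1 h2 hw1 (by tauto)
      · rw [show s(u, v) = s(v, u) from Sym2.eq_swap]
        exact key_lemma hn h1 h2 (by tauto) hw2
      · rw [show s(u, v) = s(v, u) from Sym2.eq_swap,
          show s(a, b) = s(b, a) from Sym2.eq_swap]
        exact key_lemma hn h1 h2 (by tauto) (by tauto)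
end

section
/- For m, n ≥ 4, in the line graph L(M_{m,n}) of the generalized Möbius ladder, the number of edges both of whose endpoints have degree 4 equals 2(m−1). -/
namespace GMLAux

variable {m n : ℕ}

lemma seam_eq (hm : 4 ≤ m) : ((m - 2 : ℕ) : ZMod (m - 1)) = -1 := by
  have h1 : (m - 2 : ℕ) = (m - 1) - 1 := by omega
  rw [h1, Nat.cast_sub (by omega), ZMod.natCast_self]
  ring

lemma one_ne_zero' (hm : 4 ≤ m) : (1 : ZMod (m - 1)) ≠ 0 := by
  have : ((1 : ℕ) : ZMod (m - 1)) ≠ 0 := by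
    rw [Ne, ZMod.natCast_eq_zero_iff]
    intro h
    have := Nat.le_of_dvd one_pos h
    omega
  simpa using this

lemma two_ne_zero' (hm : 4 ≤ m) : (2 : ZMod (m - 1)) ≠ 0 := by
  have : ((2 : ℕ) : ZMod (m - 1)) ≠ 0 := by
    rw [Ne, ZMod.natCast_eq_zero_iff]
    intro h
    have := Nat.le_of_dvd two_pos h
    omega
  simpa using this

lemma add_one_ne (hm : 4 ≤ m) (c : ZMod (m - 1)) : c + 1 ≠ c := by
  intro h
  exact one_ne_zero' hm (by linear_combination h - c)

lemma add_two_ne (hm : 4 ≤ m) (c : ZMod (m - 1)) : c + 2 ≠ c := by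
  intro h
  exact two_ne_zero' hm (by linear_combination h - c)

lemma add_one_ne_sub_one (hm : 4 ≤ m) (c : ZMod (m - 1)) : c + 1 ≠ c - 1 := by
  intro h
  exact two_ne_zero' hm (by linear_combination h - c + 1)

def flipR (n : ℕ) (r : Fin n) : Fin n := ⟨n - 1 - r.val, by have := r.isLt; omega⟩

def tw (m n : ℕ) (c : ZMod (m - 1)) (r : Fin n) : Fin n :=
  if c = -1 then flipR n r else r

lemma tw_tw (c : ZMod (m - 1)) (r : Fin n) : tw m n c (tw m n c r) = r := by
  unfold tw flipR
  split
  · ext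
    have := r.isLt
    simp
    omega
  · rfl

lemma tw_eq_comm {c : ZMod (m - 1)} {r r' : Fin n} : r = tw m n c r' ↔ r' = tw m n c r := by
  constructor <;> (rintro rfl; rw [tw_tw])

lemma gml_adj (hm : 4 ≤ m) (c c' : ZMod (m - 1)) (r r' : Fin n) :
    (GML m n).Adj (c, r) (c', r') ↔
      (c' = c ∧ (r'.val = r.val + 1 ∨ r.val = r'.val + 1)) ∨
      (c' = c + 1 ∧ r' = tw m n c r) ∨
      (c = c' + 1 ∧ r = tw m n c' r') := by
  rw [GML, SimpleGraph.fromRel_adj]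
  simp only [gmlRel, seam_eq hm, ne_eq, Prod.mk.injEq, not_and]
  constructor
  · rintro ⟨hne, (⟨h1, h2⟩ | ⟨h1, h2, h3⟩ | ⟨h1, h2, h3⟩) | (⟨h1, h2⟩ | ⟨h1, h2, h3⟩ | ⟨h1, h2, h3⟩)⟩
    · exact Or.inl ⟨h1.symm, Or.inl h2.symm⟩
    · refine Or.inr (Or.inl ⟨h2, ?_⟩)
      rw [tw, if_neg h1, h3]
    · refine Or.inr (Or.inl ⟨by rw [h2, h1]; ring, ?_⟩)
      rw [tw, if_pos h1]
      ext
      have := r'.isLt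
      simp [flipR]
      omega
    · exact Or.inl ⟨h1, Or.inr h2.symm⟩
    · exact Or.inr (Or.inr ⟨h2, by rw [tw, if_neg h1]; exact h3.symm⟩)
    · refine Or.inr (Or.inr ⟨by rw [h2, h1]; ring, ?_⟩)
      rw [tw, if_pos h1]
      ext
      have := r.isLt
      simp [flipR]
      omega
  · rintro (⟨rfl, h2 | h2⟩ | ⟨rfl, rfl⟩ | ⟨rfl, rfl⟩)
    · exact ⟨fun _ h => by omega, Or.inl (Or.inl ⟨rfl, h2.symm⟩)⟩
    · exact ⟨fun _ h => by omega, Or.inr (Or.inl ⟨rfl, h2.symm⟩)⟩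
    · refine ⟨fun h _ => (add_one_ne hm c h.symm).elim, Or.inl ?_⟩
      by_cases hc : c = -1
      · refine Or.inr (Or.inr ⟨hc, by rw [hc]; ring, ?_⟩)
        rw [tw, if_pos hc]
        have := r.isLt
        simp [flipR]
        omega
      · exact Or.inr (Or.inl ⟨hc, rfl, by rw [tw, if_neg hc]⟩)
    · refine ⟨fun h _ => (add_one_ne hm c' h).elim, Or.inr ?_⟩
      by_cases hc : c' = -1
      · refine Or.inr (Or.inr ⟨hc, by rw [hc]; ring, ?_⟩)
        rw [tw, if_pos hc]
        have := r'.isLt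
        simp [flipR]
        omega
      · exact Or.inr (Or.inl ⟨hc, rfl, by rw [tw, if_neg hc]⟩)

lemma third_iff (hm : 4 ≤ m) (c c' : ZMod (m - 1)) (r r' : Fin n) :
    (c = c' + 1 ∧ r = tw m n c' r') ↔ (c' = c - 1 ∧ r' = tw m n (c - 1) r) := by
  constructor
  · rintro ⟨h1, h2⟩
    have hc : c' = c - 1 := by rw [h1]; ring
    subst hc
    exact ⟨rfl, tw_eq_comm.1 h2⟩
  · rintro ⟨rfl, h2⟩
    exact ⟨by ring, tw_eq_comm.2 h2⟩

lemma nbhd_bot (hm : 4 ≤ m) (hn : 4 ≤ n) (c : ZMod (m - 1)) (r : Fin n) (hr : r.val = 0) :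
    (GML m n).neighborSet (c, r) =
      {(c, (⟨1, by omega⟩ : Fin n)), (c + 1, tw m n c r), (c - 1, tw m n (c - 1) r)} := by
  ext ⟨c', r'⟩
  simp only [SimpleGraph.mem_neighborSet, gml_adj hm, third_iff hm, Set.mem_insert_iff,
    Set.mem_singleton_iff, Prod.mk.injEq]
  constructor
  · rintro (⟨rfl, h | h⟩ | ⟨rfl, rfl⟩ | ⟨rfl, rfl⟩)
    · exact Or.inl ⟨rfl, by ext; simp; omega⟩
    · omega
    · exact Or.inr (Or.inl ⟨rfl, rfl⟩)
    · exact Or.inr (Or.inr ⟨rfl, rfl⟩)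
  · rintro (⟨rfl, rfl⟩ | ⟨rfl, rfl⟩ | ⟨rfl, rfl⟩)
    · exact Or.inl ⟨rfl, Or.inl (by simp; omega)⟩
    · exact Or.inr (Or.inl ⟨rfl, rfl⟩)
    · exact Or.inr (Or.inr ⟨rfl, rfl⟩)

lemma nbhd_top (hm : 4 ≤ m) (hn : 4 ≤ n) (c : ZMod (m - 1)) (r : Fin n) (hr : r.val = n - 1) :
    (GML m n).neighborSet (c, r) =
      {(c, (⟨n - 2, by omega⟩ : Fin n)), (c + 1, tw m n c r), (c - 1, tw m n (c - 1) r)} := by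
  ext ⟨c', r'⟩
  simp only [SimpleGraph.mem_neighborSet, gml_adj hm, third_iff hm, Set.mem_insert_iff,
    Set.mem_singleton_iff, Prod.mk.injEq]
  have hlt := r'.isLt
  constructor
  · rintro (⟨rfl, h | h⟩ | ⟨rfl, rfl⟩ | ⟨rfl, rfl⟩)
    · omega
    · exact Or.inl ⟨rfl, by ext; simp; omega⟩
    · exact Or.inr (Or.inl ⟨rfl, rfl⟩)
    · exact Or.inr (Or.inr ⟨rfl, rfl⟩)
  · rintro (⟨rfl, rfl⟩ | ⟨rfl, rfl⟩ | ⟨rfl, rfl⟩)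
    · exact Or.inl ⟨rfl, Or.inr (by simp; omega)⟩
    · exact Or.inr (Or.inl ⟨rfl, rfl⟩)
    · exact Or.inr (Or.inr ⟨rfl, rfl⟩)

lemma nbhd_mid (hm : 4 ≤ m) (hn : 4 ≤ n) (c : ZMod (m - 1)) (r : Fin n)
    (h0 : r.val ≠ 0) (h1 : r.val ≠ n - 1) :
    (GML m n).neighborSet (c, r) =
      {(c, (⟨r.val - 1, by have := r.isLt; omega⟩ : Fin n)),
       (c, (⟨r.val + 1, by have := r.isLt; omega⟩ : Fin n)),
       (c + 1, tw m n c r), (c - 1, tw m n (c - 1) r)} := by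
  ext ⟨c', r'⟩
  simp only [SimpleGraph.mem_neighborSet, gml_adj hm, third_iff hm, Set.mem_insert_iff,
    Set.mem_singleton_iff, Prod.mk.injEq]
  have hlt := r'.isLt
  have hlt2 := r.isLt
  constructor
  · rintro (⟨rfl, h | h⟩ | ⟨rfl, rfl⟩ | ⟨rfl, rfl⟩)
    · exact Or.inr (Or.inl ⟨rfl, by ext; simp; omega⟩)
    · exact Or.inl ⟨rfl, by ext; simp; omega⟩
    · exact Or.inr (Or.inr (Or.inl ⟨rfl, rfl⟩))
    · exact Or.inr (Or.inr (Or.inr ⟨rfl, rfl⟩))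
  · rintro (⟨rfl, rfl⟩ | ⟨rfl, rfl⟩ | ⟨rfl, rfl⟩ | ⟨rfl, rfl⟩)
    · exact Or.inl ⟨rfl, Or.inr (by simp; omega)⟩
    · exact Or.inl ⟨rfl, Or.inl (by simp)⟩
    · exact Or.inr (Or.inl ⟨rfl, rfl⟩)
    · exact Or.inr (Or.inr ⟨rfl, rfl⟩)

lemma ndeg_gml (hm : 4 ≤ m) (hn : 4 ≤ n) (c : ZMod (m - 1)) (r : Fin n) :
    ndeg (GML m n) (c, r) = if r.val = 0 ∨ r.val = n - 1 then 3 else 4 := by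
  have d1 : ∀ x y : Fin n, ((c : ZMod (m - 1)), x) ≠ (c + 1, y) := fun x y h =>
    add_one_ne hm c (congrArg Prod.fst h).symm
  have d2 : ∀ x y : Fin n, ((c : ZMod (m - 1)), x) ≠ (c - 1, y) := fun x y h =>
    one_ne_zero' hm (by have := congrArg Prod.fst h; linear_combination this)
  have d3 : ∀ x y : Fin n, ((c + 1 : ZMod (m - 1)), x) ≠ (c - 1, y) := fun x y h =>
    add_one_ne_sub_one hm c (congrArg Prod.fst h)
  have hlt := r.isLt
  by_cases hb : r.val = 0 ∨ r.val = n - 1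
  · rw [if_pos hb, ndeg]
    rcases hb with hr | hr
    · rw [nbhd_bot hm hn c r hr, Set.ncard_insert_of_notMem, Set.ncard_pair (d3 _ _)]
      simp only [Set.mem_insert_iff, Set.mem_singleton_iff]
      rintro (h | h)
      exacts [d1 _ _ h, d2 _ _ h]
    · rw [nbhd_top hm hn c r hr, Set.ncard_insert_of_notMem, Set.ncard_pair (d3 _ _)]
      simp only [Set.mem_insert_iff, Set.mem_singleton_iff]
      rintro (h | h)
      exacts [d1 _ _ h, d2 _ _ h]
  · push_neg at hb
    rw [if_neg (by omega), ndeg, nbhd_mid hm hn c r hb.1 hb.2,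
      Set.ncard_insert_of_notMem, Set.ncard_insert_of_notMem, Set.ncard_pair (d3 _ _)]
    · simp only [Set.mem_insert_iff, Set.mem_singleton_iff]
      rintro (h | h)
      exacts [d1 _ _ h, d2 _ _ h]
    · simp only [Set.mem_insert_iff, Set.mem_singleton_iff]
      rintro (h | h | h)
      · simp only [Prod.mk.injEq, Fin.mk.injEq] at h
        omega
      exacts [d1 _ _ h, d2 _ _ h]

section LineDeg

variable {V : Type*} [Finite V] (G : SimpleGraph V)

lemma incidence_eq (u : V) :
    {f : Sym2 V | f ∈ G.edgeSet ∧ u ∈ f} = (fun w => s(u, w)) '' G.neighborSet u := by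
  ext f
  constructor
  · rintro ⟨he, hu⟩
    obtain ⟨w, rfl⟩ := Sym2.mem_iff_exists.1 hu
    exact ⟨w, G.mem_edgeSet.1 he, rfl⟩
  · rintro ⟨w, hw, rfl⟩
    exact ⟨G.mem_edgeSet.2 hw, Sym2.mem_mk_left _ _⟩

lemma ncard_incidence (u : V) :
    {f : Sym2 V | f ∈ G.edgeSet ∧ u ∈ f}.ncard = ndeg G u := by
  rw [incidence_eq, Set.ncard_image_of_injective _ (fun a b hab => Sym2.congr_right.1 hab)]
  rfl

lemma ndeg_lineGraph {u v : V} (h : G.Adj u v) :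
    ndeg G.lineGraph ⟨s(u, v), G.mem_edgeSet.2 h⟩ = ndeg G u + ndeg G v - 2 := by
  classical
  set Au : Set (Sym2 V) := {f | f ∈ G.edgeSet ∧ u ∈ f} with hAu
  set Av : Set (Sym2 V) := {f | f ∈ G.edgeSet ∧ v ∈ f} with hAv
  set e : G.edgeSet := ⟨s(u, v), G.mem_edgeSet.2 h⟩ with he
  have himg : Subtype.val '' (G.lineGraph.neighborSet e) = (Au ∪ Av) \ {s(u, v)} := by
    ext f
    simp only [Set.mem_image, SimpleGraph.mem_neighborSet, Set.mem_diff, Set.mem_union,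
      hAu, hAv, Set.mem_setOf_eq, Set.mem_singleton_iff]
    constructor
    · rintro ⟨⟨f', hf'⟩, hadj, rfl⟩
      obtain ⟨hne, x, hx1, hx2⟩ := SimpleGraph.lineGraph_adj_iff_exists.1 hadj
      refine ⟨?_, fun hh => hne (Subtype.ext hh.symm)⟩
      rcases Sym2.mem_iff.1 hx1 with rfl | rfl
      · exact Or.inl ⟨hf', hx2⟩
      · exact Or.inr ⟨hf', hx2⟩
    · rintro ⟨hor, hne⟩
      have hf : f ∈ G.edgeSet := by rcases hor with ⟨hf, _⟩ | ⟨hf, _⟩ <;> exact hf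
      refine ⟨⟨f, hf⟩, ?_, rfl⟩
      refine SimpleGraph.lineGraph_adj_iff_exists.2 ⟨fun hh => hne (congrArg Subtype.val hh).symm, ?_⟩
      rcases hor with ⟨_, hu⟩ | ⟨_, hv⟩
      · exact ⟨u, Sym2.mem_mk_left _ _, hu⟩
      · exact ⟨v, Sym2.mem_mk_right _ _, hv⟩
  have hint : Au ∩ Av = {s(u, v)} := by
    ext f
    constructor
    · rintro ⟨⟨hf, hu⟩, ⟨_, hv⟩⟩
      exact (Sym2.mem_and_mem_iff (G.ne_of_adj h)).1 ⟨hu, hv⟩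
    · rintro rfl
      exact ⟨⟨G.mem_edgeSet.2 h, Sym2.mem_mk_left _ _⟩, ⟨G.mem_edgeSet.2 h, Sym2.mem_mk_right _ _⟩⟩
  have hmem : s(u, v) ∈ Au ∪ Av := Or.inl ⟨G.mem_edgeSet.2 h, Sym2.mem_mk_left _ _⟩
  have h1 := Set.ncard_union_add_ncard_inter Au Av (Set.toFinite _) (Set.toFinite _)
  rw [hint, Set.ncard_singleton, ncard_incidence, ncard_incidence] at h1
  have h2 : ndeg G.lineGraph e = ((Au ∪ Av) \ {s(u, v)}).ncard := by
    rw [ndeg, ← Set.ncard_image_of_injective _ Subtype.val_injective, himg]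
  rw [h2, Set.ncard_diff_singleton_of_mem hmem]
  omega

end LineDeg

def rB (n : ℕ) (hn : 4 ≤ n) (b : Bool) : Fin n :=
  if b then ⟨n - 1, by omega⟩ else ⟨0, by omega⟩

lemma rB_inj (hn : 4 ≤ n) : Function.Injective (rB n hn) := by
  intro a b h
  cases a <;> cases b <;> simp [rB] at h ⊢ <;> omega

lemma rB_val (hn : 4 ≤ n) (b : Bool) : (rB n hn b).val = 0 ∨ (rB n hn b).val = n - 1 := by
  cases b <;> simp [rB]

def bstep (m : ℕ) : ZMod (m - 1) × Bool → ZMod (m - 1) × Bool :=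
  fun x => (x.1 + 1, if x.1 = -1 then !x.2 else x.2)

def psi (m n : ℕ) (hn : 4 ≤ n) (x : ZMod (m - 1) × Bool) : ZMod (m - 1) × Fin n :=
  (x.1, rB n hn x.2)

lemma psi_inj (hn : 4 ≤ n) : Function.Injective (psi m n hn) := by
  rintro ⟨c, b⟩ ⟨c', b'⟩ h
  simp only [psi, Prod.mk.injEq] at h
  exact Prod.ext h.1 (rB_inj hn h.2)

lemma tw_rB (hn : 4 ≤ n) (c : ZMod (m - 1)) (b : Bool) :
    tw m n c (rB n hn b) = rB n hn (if c = -1 then !b else b) := by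
  by_cases hc : c = -1
  · rw [tw, if_pos hc, if_pos hc]
    cases b <;> (ext; simp [rB, flipR]) <;> omega
  · rw [tw, if_neg hc, if_neg hc]

lemma psi_bstep (hn : 4 ≤ n) (x : ZMod (m - 1) × Bool) :
    psi m n hn (bstep m x) = (x.1 + 1, tw m n x.1 (rB n hn x.2)) := by
  rw [tw_rB hn]
  rfl

lemma phi_adj (hm : 4 ≤ m) (hn : 4 ≤ n) (x : ZMod (m - 1) × Bool) :
    (GML m n).Adj (psi m n hn x) (psi m n hn (bstep m x)) := by
  rw [psi_bstep hn]
  show (GML m n).Adj (x.1, rB n hn x.2) _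
  rw [gml_adj hm]
  exact Or.inr (Or.inl ⟨rfl, rfl⟩)

def phi (m n : ℕ) (hm : 4 ≤ m) (hn : 4 ≤ n) (x : ZMod (m - 1) × Bool) : (GML m n).edgeSet :=
  ⟨s(psi m n hn x, psi m n hn (bstep m x)), (GML m n).mem_edgeSet.2 (phi_adj hm hn x)⟩

lemma bstep_fst (x : ZMod (m - 1) × Bool) : (bstep m x).1 = x.1 + 1 := rfl

lemma bstep_inj : Function.Injective (bstep m) := by
  rintro ⟨c, b⟩ ⟨c', b'⟩ h
  simp only [bstep, Prod.mk.injEq] at h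
  obtain ⟨h1, h2⟩ := h
  have hc : c = c' := by linear_combination h1
  subst hc
  refine Prod.ext rfl ?_
  by_cases hcc : c = -1 <;> simp [hcc] at h2 <;> simpa using h2

lemma ne_bstep (hm : 4 ≤ m) (x : ZMod (m - 1) × Bool) : x ≠ bstep m x := by
  intro h
  exact add_one_ne hm x.1 (congrArg Prod.fst h).symm

lemma ne_bstep2 (hm : 4 ≤ m) (x : ZMod (m - 1) × Bool) : x ≠ bstep m (bstep m x) := by
  intro h
  have : x.1 + 2 = x.1 := by
    have := (congrArg Prod.fst h).symm
    rw [bstep_fst, bstep_fst] at this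
    linear_combination this
  exact add_two_ne hm x.1 this

lemma phi_inj (hm : 4 ≤ m) (hn : 4 ≤ n) : Function.Injective (phi m n hm hn) := by
  intro x y h
  have h' := congrArg Subtype.val h
  simp only [phi] at h'
  rcases Sym2.eq_iff.1 h' with ⟨h1, _⟩ | ⟨h1, h2⟩
  · exact psi_inj hn h1
  · have hx : x = bstep m y := psi_inj hn h1
    have hy : bstep m x = y := psi_inj hn h2
    exact absurd (by rw [hy]; exact hx) (ne_bstep2 hm x)

lemma edge_classify (hm : 4 ≤ m) (hn : 4 ≤ n) (u v : ZMod (m - 1) × Fin n)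
    (h : (GML m n).Adj u v) (hu : u.2.val = 0 ∨ u.2.val = n - 1)
    (hv : v.2.val = 0 ∨ v.2.val = n - 1) :
    ∃ x, s(u, v) = (phi m n hm hn x).val := by
  obtain ⟨c, r⟩ := u
  obtain ⟨c', r'⟩ := v
  rw [gml_adj hm] at h
  simp only at hu hv
  have hr : ∀ (s : Fin n), s.val = 0 ∨ s.val = n - 1 → ∃ b, s = rB n hn b := by
    rintro s (hs | hs)
    exacts [⟨false, by ext; simpa [rB]⟩, ⟨true, by ext; simpa [rB]⟩]
  rcases h with ⟨_, h2⟩ | ⟨h1, h2⟩ | ⟨h1, h2⟩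
  · omega
  · obtain ⟨b, rfl⟩ := hr r hu
    refine ⟨(c, b), ?_⟩
    show _ = s(psi m n hn (c, b), psi m n hn (bstep m (c, b)))
    rw [psi_bstep hn]
    exact congrArg (fun p => s((c, rB n hn b), p)) (Prod.ext h1 h2)
  · obtain ⟨b, rfl⟩ := hr r' hv
    refine ⟨(c', b), ?_⟩
    show _ = s(psi m n hn (c', b), psi m n hn (bstep m (c', b)))
    rw [psi_bstep hn, Sym2.eq_swap]
    exact congrArg (fun p => s((c', rB n hn b), p)) (Prod.ext h1 h2)

lemma ndeg_phi (hm : 4 ≤ m) (hn : 4 ≤ n) (x : ZMod (m - 1) × Bool) :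
    ndeg (GML m n).lineGraph (phi m n hm hn x) = 4 := by
  haveI : NeZero (m - 1) := ⟨by omega⟩
  have key := ndeg_lineGraph (GML m n) (phi_adj hm hn x)
  have heq : (⟨s(psi m n hn x, psi m n hn (bstep m x)),
      (GML m n).mem_edgeSet.2 (phi_adj hm hn x)⟩ : (GML m n).edgeSet) = phi m n hm hn x := rfl
  rw [heq] at key
  have d1 : ndeg (GML m n) (psi m n hn x) = 3 := by
    show ndeg (GML m n) (x.1, rB n hn x.2) = 3
    rw [ndeg_gml hm hn, if_pos (rB_val hn _)]
  have d2 : ndeg (GML m n) (psi m n hn (bstep m x)) = 3 := by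
    show ndeg (GML m n) ((bstep m x).1, rB n hn (bstep m x).2) = 3
    rw [ndeg_gml hm hn, if_pos (rB_val hn _)]
  rw [key, d1, d2]

lemma exists_phi_of_ndeg4 (hm : 4 ≤ m) (hn : 4 ≤ n) (ev : Sym2 (ZMod (m - 1) × Fin n))
    (he : ev ∈ (GML m n).edgeSet)
    (h4 : ndeg (GML m n).lineGraph ⟨ev, he⟩ = 4) : ∃ x, ev = (phi m n hm hn x).val := by
  haveI : NeZero (m - 1) := ⟨by omega⟩
  revert he h4
  induction ev using Sym2.ind with
  | _ u v =>
  intro he h4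
  have h : (GML m n).Adj u v := ((GML m n).mem_edgeSet).1 he
  have key := ndeg_lineGraph (GML m n) h
  have heq : (⟨s(u, v), (GML m n).mem_edgeSet.2 h⟩ : (GML m n).edgeSet) = ⟨s(u, v), he⟩ := rfl
  rw [heq, h4] at key
  have hb3 : ∀ w : ZMod (m - 1) × Fin n,
      (ndeg (GML m n) w = 3 ∨ ndeg (GML m n) w = 4) ∧
      (ndeg (GML m n) w = 3 → w.2.val = 0 ∨ w.2.val = n - 1) := by
    rintro ⟨c, r⟩
    rw [ndeg_gml hm hn]
    split
    · next hcond => exact ⟨Or.inl rfl, fun _ => hcond⟩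
    · exact ⟨Or.inr rfl, fun hh => by omega⟩
  obtain ⟨hu34, hu3⟩ := hb3 u
  obtain ⟨hv34, hv3⟩ := hb3 v
  have hu : ndeg (GML m n) u = 3 := by omega
  have hv : ndeg (GML m n) v = 3 := by omega
  exact edge_classify hm hn u v h (hu3 hu) (hv3 hv)

end GMLAux

open GMLAux

/-- In `L(M_{m,n})` (`m, n ≥ 4`), the number of edges both of whose endpoints have degree 4 equals `2(m−1)`. -/

theorem gml_line_edges_44 (m n : ℕ) (hm : 4 ≤ m) (hn : 4 ≤ n) :
    ({E | E ∈ ((GML m n).lineGraph).edgeSet ∧ ∀ e ∈ E, ndeg (GML m n).lineGraph e = 4}.ncard : ℤ) = 2 * ((m : ℤ) - 1) := by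
  haveI : NeZero (m - 1) := ⟨by omega⟩
  have hset : {E | E ∈ ((GML m n).lineGraph).edgeSet ∧ ∀ e ∈ E, ndeg (GML m n).lineGraph e = 4} =
      Set.range (fun x => s(phi m n hm hn x, phi m n hm hn (bstep m x))) := by
    ext E
    simp only [Set.mem_setOf_eq, Set.mem_range]
    constructor
    · intro hE
      obtain ⟨hE1, hE2⟩ := hE
      revert hE1 hE2
      induction E using Sym2.ind with
      | _ ef ff =>
      intro hE1 hE2
      have hadj : (GML m n).lineGraph.Adj ef ff := ((GML m n).lineGraph.mem_edgeSet).1 hE1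
      obtain ⟨x, hx⟩ := exists_phi_of_ndeg4 hm hn ef.val ef.2
        (hE2 ef (Sym2.mem_mk_left _ _))
      obtain ⟨y, hy⟩ := exists_phi_of_ndeg4 hm hn ff.val ff.2
        (hE2 ff (Sym2.mem_mk_right _ _))
      have hex : ef = phi m n hm hn x := Subtype.ext hx
      have hey : ff = phi m n hm hn y := Subtype.ext hy
      subst hex hey
      obtain ⟨hne, z, hz1, hz2⟩ := SimpleGraph.lineGraph_adj_iff_exists.1 hadj
      have hz1' : z = psi m n hn x ∨ z = psi m n hn (bstep m x) := Sym2.mem_iff.1 hz1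
      have hz2' : z = psi m n hn y ∨ z = psi m n hn (bstep m y) := Sym2.mem_iff.1 hz2
      rcases hz1' with rfl | h1 <;> rcases hz2' with h2 | h2
      · exact absurd (congrArg (phi m n hm hn) (psi_inj hn h2)) hne
      · have hxy : x = bstep m y := psi_inj hn h2
        exact ⟨y, by rw [hxy]; exact Sym2.eq_swap⟩
      · have hyx : bstep m x = y := psi_inj hn (h1.symm.trans h2)
        exact ⟨x, by rw [hyx]⟩
      · have : x = y := bstep_inj (psi_inj hn (h1.symm.trans h2))
        exact absurd (congrArg (phi m n hm hn) this) hne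
    · rintro ⟨x, rfl⟩
      refine ⟨?_, ?_⟩
      · refine SimpleGraph.lineGraph_adj_iff_exists.2
          ⟨fun hh => ne_bstep hm x (phi_inj hm hn hh), psi m n hn (bstep m x), ?_, ?_⟩
        · exact Sym2.mem_mk_right _ _
        · exact Sym2.mem_mk_left _ _
      · intro e hemem
        rcases Sym2.mem_iff.1 hemem with rfl | rfl
        exacts [ndeg_phi hm hn x, ndeg_phi hm hn (bstep m x)]
  rw [hset]
  have hinj : Function.Injective
      (fun x => s(phi m n hm hn x, phi m n hm hn (bstep m x))) := by
    intro x y h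
    rcases Sym2.eq_iff.1 h with ⟨h1, _⟩ | ⟨h1, h2⟩
    · exact phi_inj hm hn h1
    · have hx := phi_inj hm hn h1
      have hy := phi_inj hm hn h2
      exact absurd (by rw [hy]; exact hx) (ne_bstep2 hm x)
  rw [← Set.image_univ, Set.ncard_image_of_injective _ hinj, Set.ncard_univ]
  rw [Nat.card_prod, Nat.card_eq_fintype_card, Nat.card_eq_fintype_card, ZMod.card,
    Fintype.card_bool]
  omega
end
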